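/- arXiv:2011.02805 — 2 statements merged into one kernel-verified Lean document; each statement's English description precedes it below -/
import Mathlib

section
/- Let m ≥ 2, n = 2^m − 1, and let r be a positive integer with (r+1) | n. Let C be the binary cyclic code of length n with defining set of exponents Z = {j(r+1) : j = 0, 1, …, n/(r+1) − 1} ∪ [1] ∪ [n−1], where [1] and [n−1] are the 2-cyclotomic cosets of 1 and n−1 modulo n. Then C is an LCD code, i.e., C ∩ C^⊥ = {0}. -/
/-!
Write `dft α x u = ∑ xᵢ α^(iu)` for the value of the codeword polynomial at `α^u`, and let `q = #K`.
Let `x ∈ C ∩ C^⊥` and suppose `dft α x u ≠ 0`. By Frobenius `dft α x (u q^j) = (dft α x u)^(q^j) ≠ 0`,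
while `dft α x` vanishes on `Z`; since `Z` is closed under negation mod `n`, no `u q^j + z` with
`z ∈ Z` is divisible by `n`. Hence the trace codeword `cᵢ = Tr(γ α^(iu))` lies in `C`: expanding the
trace as `∑ⱼ (·)^(q^j)` turns each check sum into geometric sums over nontrivial `n`-th roots of
unity. Orthogonality of `x` and `c` then gives `0 = ∑ xᵢ cᵢ = Tr(γ · dft α x u)`, which is `1` for
a suitable `γ`. So `dft α x` vanishes identically and `x = 0`, the Vandermonde matrix of the distinct
powers of `α` being invertible. The defining set of the theorem is closed under negation mod `n`
because `r + 1 ∣ n` and `-[1] = [n - 1]`.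
-/

/-- The cyclic code of length `n` with defining set of exponents `Z`:
codewords have entries in the field `K`, and parity checks are computed in
the field `F` via the ring homomorphism `φ`, using powers of `α`. -/
def cyclicCode {K F : Type*} [Field K] [Field F] (φ : K →+* F) (n : ℕ) (α : F)
    (Z : Set ℕ) : Submodule K (Fin n → K) where
  carrier := {c | ∀ z ∈ Z, ∑ i : Fin n, φ (c i) * α ^ ((i : ℕ) * z) = 0}
  add_mem' := by
    intro a b ha hb z hz
    have h : (∑ i : Fin n, φ ((a + b) i) * α ^ ((i : ℕ) * z))
        = (∑ i : Fin n, φ (a i) * α ^ ((i : ℕ) * z))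
          + ∑ i : Fin n, φ (b i) * α ^ ((i : ℕ) * z) := by
      rw [← Finset.sum_add_distrib]
      refine Finset.sum_congr rfl fun i _ => ?_
      simp [add_mul]
    rw [h, ha z hz, hb z hz, add_zero]
  zero_mem' := by intro z hz; simp
  smul_mem' := by
    intro c a ha z hz
    have h : (∑ i : Fin n, φ ((c • a) i) * α ^ ((i : ℕ) * z))
        = φ c * ∑ i : Fin n, φ (a i) * α ^ ((i : ℕ) * z) := by
      rw [Finset.mul_sum]
      refine Finset.sum_congr rfl fun i _ => ?_
      simp [mul_assoc]
    rw [h, ha z hz, mul_zero]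

/-- The dual of a code: all vectors orthogonal to every codeword. -/
def dualCode {K : Type*} [Field K] {n : ℕ} (C : Set (Fin n → K)) : Set (Fin n → K) :=
  {x | ∀ c ∈ C, ∑ i : Fin n, x i * c i = 0}

/-- A linear code is LCD if its intersection with its dual is `{0}`. -/
def IsLCD {K : Type*} [Field K] {n : ℕ} (C : Submodule K (Fin n → K)) : Prop :=
  (C : Set (Fin n → K)) ∩ dualCode (C : Set (Fin n → K)) = {0}

/-- A code has locality `r` if every coordinate position `i` is recoverable as a fixed
linear combination of at most `r` other coordinate positions, uniformly over all codewords. -/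
def HasLocality {K : Type*} [Field K] {n : ℕ} (C : Set (Fin n → K)) (r : ℕ) : Prop :=
  ∀ i : Fin n, ∃ (R : Finset (Fin n)) (lam : Fin n → K),
    i ∉ R ∧ R.card ≤ r ∧ ∀ c ∈ C, c i = ∑ j ∈ R, lam j * c j

/-- The `q`-cyclotomic coset of `a` modulo `n`:
`[a] = {a·q^j mod n : j = 0, 1, 2, …}` (natural number version). -/
def cycCoset (q n a : ℕ) : Set ℕ := {b | ∃ j : ℕ, b = a * q ^ j % n}

open Finset

section Transform

variable {K F : Type*} [Field K] [Field F] [Algebra K F] {n : ℕ}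

def dft (α : F) (x : Fin n → K) (u : ℕ) : F :=
  ∑ i : Fin n, algebraMap K F (x i) * α ^ ((i : ℕ) * u)

theorem dft_congr {α : F} (hα : orderOf α = n) (x : Fin n → K) {u v : ℕ}
    (h : u ≡ v [MOD n]) : dft α x u = dft α x v := by
  subst hα
  refine sum_congr rfl fun i _ => ?_
  rw [← pow_mod_orderOf, (h.mul_left (i : ℕ) : _ % _ = _ % _), pow_mod_orderOf]

theorem eq_zero_of_forall_dft_eq_zero {α : F} (hα : orderOf α = n) {x : Fin n → K}
    (h : ∀ u, dft α x u = 0) : x = 0 := by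
  have hinj : Function.Injective fun j : Fin n => α ^ (j : ℕ) := fun j k hjk =>
    Fin.ext <| pow_injOn_Iio_orderOf (hα ▸ j.isLt) (hα ▸ k.isLt) hjk
  have := Matrix.eq_zero_of_forall_index_sum_mul_pow_eq_zero hinj fun j => by
    simpa only [dft, ← pow_mul, mul_comm (j : ℕ)] using h j
  funext i
  exact (algebraMap K F).injective (by simpa using congrFun this i)

theorem sum_pow_eq_zero_of_pow_eq_one {ω : F} (h : ω ^ n = 1) (hω : ω ≠ 1) :
    ∑ i : Fin n, ω ^ (i : ℕ) = 0 := by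
  rw [Fin.sum_univ_eq_sum_range (ω ^ ·), geom_sum_eq hω, h, sub_self, zero_div]

theorem sum_mul_trace (α γ : F) (x : Fin n → K) (u : ℕ) :
    ∑ i, x i * Algebra.trace K F (γ * α ^ ((i : ℕ) * u)) = Algebra.trace K F (γ * dft α x u) := by
  simp only [dft, mul_sum, map_sum, ← Algebra.smul_def, mul_smul_comm, map_smul, smul_eq_mul]

variable [Fintype K]

theorem dft_mul_card_pow (α : F) (x : Fin n → K) (u j : ℕ) :
    dft α x (u * Fintype.card K ^ j) = dft α x u ^ Fintype.card K ^ j := by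
  have frob : ∀ y : F, (FiniteField.frobeniusAlgHom K F ^ j) y = y ^ Fintype.card K ^ j :=
    fun y => by rw [AlgHom.coe_pow, FiniteField.coe_frobeniusAlgHom, pow_iterate]
  simp only [dft, ← frob, map_sum, map_mul, AlgHom.commutes]
  simp only [frob, ← pow_mul, mul_assoc]

variable [Finite F]

theorem trace_mem_cyclicCode {α : F} (hα : orderOf α = n) {Z : Set ℕ} (γ : F) {u : ℕ}
    (hu : ∀ z ∈ Z, ∀ j, ¬ n ∣ u * Fintype.card K ^ j + z) :
    (fun i : Fin n => Algebra.trace K F (γ * α ^ ((i : ℕ) * u)))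
      ∈ cyclicCode (algebraMap K F) n α Z := by
  intro z hz
  have hαn : α ^ n = 1 := hα ▸ pow_orderOf_eq_one α
  calc ∑ i : Fin n, algebraMap K F (Algebra.trace K F (γ * α ^ ((i : ℕ) * u))) * α ^ ((i : ℕ) * z)
      = ∑ j ∈ range (Module.finrank K F), γ ^ Fintype.card K ^ j *
          ∑ i : Fin n, (α ^ (u * Fintype.card K ^ j + z)) ^ (i : ℕ) := by
        simp only [FiniteField.algebraMap_trace_eq_sum_pow, Nat.card_eq_fintype_card, sum_mul,
          mul_sum]
        rw [sum_comm]
        refine sum_congr rfl fun j _ => sum_congr rfl fun i _ => ?_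
        rw [mul_pow, mul_assoc, ← pow_mul, ← pow_add, ← pow_mul]
        ring_nf
    _ = 0 := sum_eq_zero fun j _ => by
        rw [sum_pow_eq_zero_of_pow_eq_one (by rw [← pow_mul, mul_comm, pow_mul, hαn, one_pow]),
          mul_zero]
        rw [Ne, ← orderOf_dvd_iff_pow_eq_one, hα]
        exact hu z hz j

theorem dft_eq_zero_of_mem_inf_dualCode {α : F} (hα : orderOf α = n) {Z : Set ℕ}
    (hZ : ∀ z ∈ Z, ∃ z' ∈ Z, n ∣ z + z') {x : Fin n → K}
    (hxC : x ∈ cyclicCode (algebraMap K F) n α Z)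
    (hxD : x ∈ dualCode (cyclicCode (algebraMap K F) n α Z : Set (Fin n → K))) (u : ℕ) :
    dft α x u = 0 := by
  by_contra hs
  have hu : ∀ z ∈ Z, ∀ j, ¬ n ∣ u * Fintype.card K ^ j + z := by
    intro z hz j hdvd
    obtain ⟨z', hz', hzz'⟩ := hZ z hz
    have hmod : u * Fintype.card K ^ j ≡ z' [MOD n] := Nat.ModEq.add_right_cancel' z <|
      (Nat.modEq_zero_iff_dvd.2 hdvd).trans (Nat.modEq_zero_iff_dvd.2 (add_comm z z' ▸ hzz')).symm
    have hpow := dft_mul_card_pow α x u j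
    rw [dft_congr hα x hmod] at hpow
    exact hs (pow_eq_zero_iff (by positivity) |>.1 (hpow.symm.trans (hxC z' hz')))
  obtain ⟨y, hy⟩ := Algebra.trace_surjective K F 1
  have horth := hxD _ (trace_mem_cyclicCode hα (y / dft α x u) hu)
  rw [sum_mul_trace, div_mul_cancel₀ _ hs, hy] at horth
  exact one_ne_zero horth

theorem isLCD_cyclicCode {α : F} (hα : orderOf α = n) {Z : Set ℕ}
    (hZ : ∀ z ∈ Z, ∃ z' ∈ Z, n ∣ z + z') : IsLCD (cyclicCode (algebraMap K F) n α Z) :=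
  Set.eq_singleton_iff_unique_mem.2 ⟨⟨zero_mem _, fun c _ => by simp⟩, fun _ ⟨hxC, hxD⟩ =>
    eq_zero_of_forall_dft_eq_zero hα (dft_eq_zero_of_mem_inf_dualCode hα hZ hxC hxD)⟩

end Transform

theorem dvd_add_sub_mod {n z : ℕ} (h : z ≤ n) : n ∣ z + (n - z) % n :=
  Nat.dvd_of_mod_eq_zero <| by
    rw [Nat.add_mod, Nat.mod_mod, ← Nat.add_mod, Nat.add_sub_cancel' h, Nat.mod_self]

theorem exists_add_dvd_of_mem_multiples {d n z : ℕ} (hd : d ∣ n)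
    (hz : z ∈ {z | ∃ j < n / d, z = j * d}) :
    ∃ z' ∈ {z | ∃ j < n / d, z = j * d}, n ∣ z + z' := by
  obtain ⟨j, hj, rfl⟩ := hz
  have hlt : j * d < n := Nat.mul_comm d j ▸ (Nat.lt_div_iff_mul_lt' hd j).1 hj
  have hdvd : d ∣ (n - j * d) % n := (Nat.dvd_mod_iff hd).2 (Nat.dvd_sub hd (dvd_mul_left d j))
  refine ⟨_, ⟨(n - j * d) % n / d, ?_, (Nat.div_mul_cancel hdvd).symm⟩, dvd_add_sub_mod hlt.le⟩
  rw [Nat.lt_div_iff_mul_lt' hd, Nat.mul_div_cancel' hdvd]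
  exact Nat.mod_lt _ (by omega)

theorem exists_add_dvd_of_mem_cycCoset {q n a z : ℕ} (ha : a ≤ n) (hz : z ∈ cycCoset q n a) :
    ∃ z' ∈ cycCoset q n (n - a), n ∣ z + z' := by
  obtain ⟨j, rfl⟩ := hz
  refine ⟨_, ⟨j, rfl⟩, Nat.dvd_of_mod_eq_zero ?_⟩
  rw [← Nat.add_mod, ← add_mul, Nat.add_sub_cancel' ha, Nat.mul_mod_right]

theorem stmt6_general (m : ℕ) (hm : 2 ≤ m) (n : ℕ) (hn : n = 2 ^ m - 1)
    (F : Type*) [Field F] [Fintype F] [CharP F 2]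
    (α : F) (hα : orderOf α = n)
    (r : ℕ) (hrn : r + 1 ∣ n) :
    IsLCD (cyclicCode (ZMod.castHom (dvd_refl 2) F) n α
      ({z | ∃ j < n / (r + 1), z = j * (r + 1)} ∪ cycCoset 2 n 1 ∪ cycCoset 2 n (n - 1))) := by
  let _ : Algebra (ZMod 2) F := ZMod.algebra F 2
  have hn0 : 1 ≤ n := by
    have := Nat.one_lt_two_pow (show m ≠ 0 by omega)
    omega
  rw [show ZMod.castHom (dvd_refl 2) F = algebraMap (ZMod 2) F from Subsingleton.elim _ _]
  refine isLCD_cyclicCode hα ?_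
  rintro z ((hz | hz) | hz)
  · obtain ⟨z', hz', hzz'⟩ := exists_add_dvd_of_mem_multiples hrn hz
    exact ⟨z', .inl (.inl hz'), hzz'⟩
  · obtain ⟨z', hz', hzz'⟩ := exists_add_dvd_of_mem_cycCoset hn0 hz
    exact ⟨z', .inr hz', hzz'⟩
  · obtain ⟨z', hz', hzz'⟩ := exists_add_dvd_of_mem_cycCoset (Nat.sub_le n 1) hz
    rw [Nat.sub_sub_self hn0] at hz'
    exact ⟨z', .inl (.inr hz'), hzz'⟩

/-- Construction 2: the binary cyclic code of length `n = 2^m − 1` with defining set of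
exponents `{j(r+1) : j = 0, …, n/(r+1) − 1} ∪ [1] ∪ [n−1]` is an LCD code. -/
theorem stmt6 (m : ℕ) (hm : 2 ≤ m) (n : ℕ) (hn : n = 2 ^ m - 1)
    (F : Type*) [Field F] [Fintype F] [CharP F 2] (hcard : Fintype.card F = 2 ^ m)
    (α : F) (hα : orderOf α = n)
    (r : ℕ) (hr : 0 < r) (hrn : r + 1 ∣ n) :
    IsLCD (cyclicCode (ZMod.castHom (dvd_refl 2) F) n α
      ({z | ∃ j < n / (r + 1), z = j * (r + 1)} ∪ cycCoset 2 n 1 ∪ cycCoset 2 n (n - 1))) :=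
  stmt6_general m hm n hn F α hα r hrn
end

section
/- Under the stated hypotheses, the cyclic code C of length n over F with defining set of exponents Z = L ∪ D is an LCD code, i.e., C ∩ C^⊥ = {0}. -/
def NegClosedMod (n : ℕ) (Z : Set ℕ) : Prop :=
  ∀ z ∈ Z, ∀ a < n, n ∣ a + z → a ∈ Z

lemma NegClosedMod.union {n : ℕ} {Z W : Set ℕ} (hZ : NegClosedMod n Z) (hW : NegClosedMod n W) :
    NegClosedMod n (Z ∪ W) := by
  rintro z (hz | hz) a ha hdvd
  · exact Or.inl (hZ z hz a ha hdvd)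
  · exact Or.inr (hW z hz a ha hdvd)

lemma negClosedMod_multiples {n d : ℕ} (hd : d ∣ n) : NegClosedMod n {i | i < n ∧ d ∣ i} :=
  fun _ hz _ ha hdvd => ⟨ha, (Nat.dvd_add_left hz.2).mp (hd.trans hdvd)⟩

lemma negClosedMod_residues_Icc (n t : ℕ) :
    NegClosedMod n
      {d : ℕ | ∃ s : ℤ, -(t : ℤ) ≤ s ∧ s ≤ (t : ℤ) ∧ (d : ℤ) = s % (n : ℤ)} := by
  rintro z ⟨s, hs₁, hs₂, hz⟩ a ha hdvd
  refine ⟨-s, by omega, by omega, ?_⟩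
  have hsz : (n : ℤ) ∣ s - z := hz ▸ (Int.mod_modEq s n).dvd
  have haz : (n : ℤ) ∣ a + z := by exact_mod_cast hdvd
  have hmod : (a : ℤ) ≡ -s [ZMOD n] := by
    rw [Int.modEq_iff_dvd, show -s - (a : ℤ) = -((s - z) + (a + z)) by ring]
    exact (dvd_add hsz haz).neg_right
  rw [← hmod, Int.emod_eq_of_lt (by positivity) (by exact_mod_cast ha)]

section CyclicCode

variable {F : Type*} [Field F] {n : ℕ} {α : F}

lemma sum_pow_mul_eq_zero_of_not_dvd (hα : orderOf α = n) {m : ℕ} (hm : ¬ n ∣ m) :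
    ∑ i : Fin n, α ^ ((i : ℕ) * m) = 0 := by
  have hne : α ^ m ≠ 1 := fun h => hm (hα ▸ orderOf_dvd_of_pow_eq_one h)
  have hroot : (α ^ m) ^ n = 1 := by
    rw [← pow_mul, mul_comm, pow_mul, ← hα, pow_orderOf_eq_one, one_pow]
  simp_rw [mul_comm _ m, pow_mul]
  rw [Fin.sum_univ_eq_sum_range (fun i => (α ^ m) ^ i), geom_sum_eq hne, hroot, sub_self,
    zero_div]

lemma eq_zero_of_forall_sum_mul_pow_eq_zero (hα : orderOf α = n) {c : Fin n → F}
    (hc : ∀ a : Fin n, ∑ i : Fin n, c i * α ^ ((i : ℕ) * a) = 0) : c = 0 := by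
  have hinj : Function.Injective fun i : Fin n => α ^ (i : ℕ) := fun i j hij =>
    Fin.ext (pow_injOn_Iio_orderOf (hα ▸ i.isLt) (hα ▸ j.isLt) hij)
  refine Matrix.eq_zero_of_vecMul_eq_zero (Matrix.det_vandermonde_ne_zero_iff.mpr hinj) ?_
  ext a
  simpa [Matrix.vecMul, dotProduct, Matrix.vandermonde_apply, ← pow_mul] using hc a

lemma pow_mul_mem_cyclicCode (hα : orderOf α = n) {Z : Set ℕ} (hZ : NegClosedMod n Z)
    {a : ℕ} (ha : a < n) (haZ : a ∉ Z) :
    (fun i : Fin n => α ^ ((i : ℕ) * a)) ∈ cyclicCode (RingHom.id F) n α Z := by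
  intro z hz
  simp only [RingHom.id_apply, ← pow_add, ← mul_add]
  exact sum_pow_mul_eq_zero_of_not_dvd hα fun h => haZ (hZ z hz a ha h)

theorem isLCD_cyclicCode_of_negClosedMod (hα : orderOf α = n) {Z : Set ℕ}
    (hZ : NegClosedMod n Z) : IsLCD (cyclicCode (RingHom.id F) n α Z) := by
  refine Set.eq_singleton_iff_unique_mem.mpr ⟨⟨zero_mem _, fun _ _ => by simp⟩, ?_⟩
  rintro c ⟨hcC, hcD⟩
  refine eq_zero_of_forall_sum_mul_pow_eq_zero hα fun a => ?_
  by_cases haZ : (a : ℕ) ∈ Z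
  · simpa using hcC a haZ
  · exact hcD _ (pow_mul_mem_cyclicCode hα hZ a.isLt haZ)

end CyclicCode

theorem stmt11_general
    (F : Type*) [Field F] (n r : ℕ)
    (α : F) (hα : orderOf α = n)
    (hr1n : r + 1 ∣ n)
    (t : ℕ)
    (L D : Set ℕ)
    (hL : L = {i | i < n ∧ (r + 1) ∣ i})
    (hD : D = {d : ℕ | ∃ s : ℤ, -(t : ℤ) ≤ s ∧ s ≤ (t : ℤ) ∧ (d : ℤ) = s % (n : ℤ)})
    : IsLCD (cyclicCode (RingHom.id F) n α (L ∪ D)) := by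
  subst hL hD
  exact isLCD_cyclicCode_of_negClosedMod hα
    ((negClosedMod_multiples hr1n).union (negClosedMod_residues_Icc n t))

/-- Theorem 3.3: under the stated hypotheses, the cyclic code of length `n` over `F`
with defining set of exponents `Z = L ∪ D` is an LCD code. -/
theorem stmt11
    (F : Type*) [Field F] [Fintype F] (n k r : ℕ)
    (hn : 0 < n) (hk : 0 < k) (hr : 0 < r) (hrk : r ≤ k)
    (α : F) (hα : orderOf α = n)
    (hr1n : r + 1 ∣ n) (hrdk : r ∣ k) (hkn : k * (r + 1) ≤ n * r)
    (heven : Even (n / (r + 1) - k / r))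
    (t : ℕ) (ht : t = (n - k * (r + 1) / r) / 2)
    (L D : Set ℕ)
    (hL : L = {i | i < n ∧ (r + 1) ∣ i})
    (hD : D = {d : ℕ | ∃ s : ℤ, -(t : ℤ) ≤ s ∧ s ≤ (t : ℤ) ∧ (d : ℤ) = s % (n : ℤ)})
    : IsLCD (cyclicCode (RingHom.id F) n α (L ∪ D)) :=
  stmt11_general F n r α hα hr1n t L D hL hD
end
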